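/- The set {(x,y) ∈ ℤ × ℤ : y is even} is a vertex cover of the infinite hexagonal grid T₃, and for all integers m, n ≥ 1 it meets {0,…,m−1} × {0,…,2n−1} in exactly m·n vertices. -/

import Mathlib

/-- A vertex cover of a simple graph: every edge has at least one endpoint in `C`. -/
def IsVertexCover {V : Type*} (G : SimpleGraph V) (C : Set V) : Prop :=
  ∀ ⦃u v : V⦄, G.Adj u v → u ∈ C ∨ v ∈ C

/-- The box `{0,…,w−1} × {0,…,h−1}` (w columns, h rows). -/
def box (w h : ℕ) : Set (ℤ × ℤ) :=
  Set.Ico (0 : ℤ) (w : ℤ) ×ˢ Set.Ico (0 : ℤ) (h : ℤ)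

/-- Subgraph of `G` induced on a set `s` of vertices (kept on the same vertex type). -/
def finGrid (G : SimpleGraph (ℤ × ℤ)) (w h : ℕ) : SimpleGraph (ℤ × ℤ) where
  Adj p q := G.Adj p q ∧ p ∈ box w h ∧ q ∈ box w h
  symm := ⟨fun p q hpq => ⟨hpq.1.symm, hpq.2.2, hpq.2.1⟩⟩
  loopless := ⟨fun p hp => G.loopless.irrefl p hp.1⟩

/-- The infinite hexagonal grid. -/
def T3 : SimpleGraph (ℤ × ℤ) :=
  SimpleGraph.fromRel (fun p q =>
    q = (p.1, p.2 + 1) ∨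
    ((4 : ℤ) ∣ p.2 ∧ q = (p.1 + 1, p.2 + 1)) ∨
    ((4 : ℤ) ∣ (p.2 - 2) ∧ q = (p.1 - 1, p.2 + 1)))

theorem Int.even_or_even_of_eq_add_one {a b : ℤ} (h : b = a + 1 ∨ a = b + 1) :
    Even a ∨ Even b := by
  have even_or_even_succ (c : ℤ) : Even c ∨ Even (c + 1) :=
    (Int.even_or_odd c).imp_right Odd.add_one
  rcases h with rfl | rfl
  · exact even_or_even_succ a
  · exact (even_or_even_succ b).symm

theorem isVertexCover_even_snd_of_adj {G : SimpleGraph (ℤ × ℤ)}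
    (hG : ∀ ⦃p q⦄, G.Adj p q → q.2 = p.2 + 1 ∨ p.2 = q.2 + 1) :
    IsVertexCover G {p | Even p.2} :=
  fun _ _ hpq => Int.even_or_even_of_eq_add_one (hG hpq)

theorem T3_adj_snd ⦃p q : ℤ × ℤ⦄ (h : T3.Adj p q) : q.2 = p.2 + 1 ∨ p.2 = q.2 + 1 := by
  obtain ⟨-, h | h⟩ := h
  · left
    rcases h with rfl | ⟨-, rfl⟩ | ⟨-, rfl⟩ <;> rfl
  · right
    rcases h with rfl | ⟨-, rfl⟩ | ⟨-, rfl⟩ <;> rfl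

theorem ncard_box (w h : ℕ) : (box w h).ncard = w * h := by
  simp [box, Set.ncard_prod, ← Finset.coe_Ico, Set.ncard_coe_finset]

theorem even_snd_inter_box_eq_image (w h : ℕ) :
    {p : ℤ × ℤ | Even p.2} ∩ box w (2 * h) =
      (fun p : ℤ × ℤ => (p.1, 2 * p.2)) '' box w h := by
  ext ⟨x, y⟩
  simp only [Set.mem_inter_iff, Set.mem_ofPred_eq, box, Set.mem_prod, Set.mem_Ico, Set.mem_image,
    Prod.exists, Prod.mk.injEq, even_iff_two_dvd]
  constructor
  · rintro ⟨⟨k, rfl⟩, hx, hy⟩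
    exact ⟨x, k, ⟨hx, by omega⟩, rfl, rfl⟩
  · rintro ⟨x, k, ⟨hx, hk⟩, rfl, rfl⟩
    exact ⟨dvd_mul_right 2 k, hx, by omega⟩

/-- The set of vertices with even `y` is a vertex cover of the infinite hexagonal grid, and it
meets `{0,…,m−1} × {0,…,2n−1}` in exactly `m·n` vertices. -/
theorem stmt_3 :
    IsVertexCover T3 {p : ℤ × ℤ | Even p.2} ∧
    ∀ m n : ℕ, 1 ≤ m → 1 ≤ n →
      ({p : ℤ × ℤ | Even p.2} ∩ box m (2 * n)).ncard = m * n := by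
  refine ⟨isVertexCover_even_snd_of_adj T3_adj_snd, fun m n _ _ => ?_⟩
  have hinj : Function.Injective fun p : ℤ × ℤ => (p.1, 2 * p.2) := fun p q h => by
    simp only [Prod.mk.injEq] at h
    exact Prod.ext h.1 (by omega)
  rw [even_snd_inter_box_eq_image, Set.ncard_image_of_injective _ hinj, ncard_box]
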